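/- For every natural number n, the free abelian group ℤ^n is isotypically rigid: every group H that is isotypic to ℤ^n is isomorphic to ℤ^n. -/

import Mathlib

/-!
Let `H` be isotypic to `ℤⁿ`. The type of a tuple decides which words in it are trivial, and
commutativity is expressed by a formula, so `H` is abelian and a tuple `a` in `H` with the type of
the standard basis `e` of `ℤⁿ` is independent. Given `x ∈ H`, pick `(b, c)` in `ℤⁿ` with the type
of `(a, x)`. Then `b` has the type of `e`, so it is independent and `dℤⁿ ⊆ ⟨b⟩` for
`d = |det b| ≠ 0`; and, like `e`, it generates `ℤⁿ` modulo `d`-th powers, which for fixed `d` is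
first-order. Hence `c` is a word in `b`, and the same word in `a` is `x`.
-/

open FirstOrder Language

/-- The first-order language of groups: a binary function symbol (multiplication),
a unary function symbol (inversion), and a constant symbol (identity). -/
def grpLang : FirstOrder.Language :=
  ⟨fun n => match n with
    | 0 => Unit
    | 1 => Unit
    | 2 => Unit
    | _ => Empty,
   fun _ => Empty⟩

/-- The natural interpretation of the language of groups in a group. -/
def grpStructure (G : Type*) [Group G] : grpLang.Structure G where
  funMap {n} f v :=
    match n, f, v with
    | 0, _, _ => 1
    | 1, _, v => (v 0)⁻¹
    | 2, _, v => v 0 * v 1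
    | (_ + 3), f, _ => f.elim
  RelMap := fun {_} r => r.elim

/-- The type of a tuple `a : Fin n → G` in a group `G`: the set of all first-order
formulas in the language of groups, in free variables `x₁, …, xₙ`, satisfied by `a`. -/
def groupTypeOfTuple (G : Type*) [Group G] {n : ℕ} (a : Fin n → G) :
    Set (grpLang.Formula (Fin n)) :=
  letI := grpStructure G
  {φ | φ.Realize a}

/-- Two groups are isotypic if every tuple in either of them has a tuple in the other
realizing exactly the same type in the first-order language of groups. -/
def GroupIsotypic (G H : Type*) [Group G] [Group H] : Prop :=
  ∀ n : ℕ,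
    (∀ a : Fin n → G, ∃ b : Fin n → H, groupTypeOfTuple G a = groupTypeOfTuple H b) ∧
    (∀ b : Fin n → H, ∃ a : Fin n → G, groupTypeOfTuple G a = groupTypeOfTuple H b)

namespace grpLang

variable {α : Type*}

def mul (t s : grpLang.Term α) : grpLang.Term α := Term.func (l := 2) () ![t, s]

def inv (t : grpLang.Term α) : grpLang.Term α := Term.func (l := 1) () ![t]

def one : grpLang.Term α := Term.func (l := 0) () ![]

def npow (t : grpLang.Term α) : ℕ → grpLang.Term α
  | 0 => one
  | k + 1 => mul (npow t k) t

def zpow (t : grpLang.Term α) : ℤ → grpLang.Term α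
  | Int.ofNat k => npow t k
  | Int.negSucc k => inv (npow t (k + 1))

def listProd : List (grpLang.Term α) → grpLang.Term α
  | [] => one
  | t :: ts => mul t (listProd ts)

def prodZPow {n : ℕ} (u : Fin n → grpLang.Term α) (m : Fin n → ℤ) : grpLang.Term α :=
  listProd (List.ofFn fun i => zpow (u i) (m i))

section Realize

attribute [local instance] grpStructure

section
variable {G : Type*} [Group G] (v : α → G)

@[simp] theorem realize_mul (t s : grpLang.Term α) :
    (mul t s).realize v = t.realize v * s.realize v := rfl

@[simp] theorem realize_inv (t : grpLang.Term α) : (inv t).realize v = (t.realize v)⁻¹ := rfl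

@[simp] theorem realize_one : (one : grpLang.Term α).realize v = 1 := rfl

@[simp] theorem realize_npow (t : grpLang.Term α) (k : ℕ) :
    (npow t k).realize v = t.realize v ^ k := by
  induction k with
  | zero => exact (pow_zero _).symm
  | succ k ih => rw [npow, realize_mul, ih, pow_succ]

@[simp] theorem realize_zpow (t : grpLang.Term α) (m : ℤ) :
    (zpow t m).realize v = t.realize v ^ m := by
  cases m with
  | ofNat k => simp [zpow]
  | negSucc k => simp [zpow, zpow_negSucc]

@[simp] theorem realize_listProd (ts : List (grpLang.Term α)) :
    (listProd ts).realize v = (ts.map (Term.realize v)).prod := by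
  induction ts with
  | nil => rfl
  | cons t ts ih => simp [listProd, ih]

end

@[simp] theorem realize_prodZPow {G : Type*} [CommGroup G] (v : α → G) {n : ℕ}
    (u : Fin n → grpLang.Term α) (m : Fin n → ℤ) :
    (prodZPow u m).realize v = ∏ i, (u i).realize v ^ m i := by
  simp [prodZPow, List.map_ofFn, List.prod_ofFn, Function.comp_def]

end Realize

section Formulas

variable {α : Type*}

def mulCommFormula : grpLang.Formula α :=
  BoundedFormula.all <| BoundedFormula.all <| Term.bdEqual
    (mul (Term.var (Sum.inr 0)) (Term.var (Sum.inr 1)))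
    (mul (Term.var (Sum.inr 1)) (Term.var (Sum.inr 0)))

def prodZPowEqOneFormula {n : ℕ} (m : Fin n → ℤ) : grpLang.Formula (Fin n) :=
  Term.equal (prodZPow Term.var m) one

/-- `∀ x, ⋁ r : Fin n → Fin k, ∃ y, x = (∏ i, xᵢ ^ rᵢ) * y ^ k`. -/
noncomputable def spanModPowFormula {n : ℕ} (k : ℕ) : grpLang.Formula (Fin n) :=
  BoundedFormula.all <| BoundedFormula.iSup fun r : Fin n → Fin k =>
    BoundedFormula.ex <| Term.bdEqual (Term.var (Sum.inr 0))
      (mul (prodZPow (fun i => Term.var (Sum.inl i)) fun i => (r i : ℤ))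
        (npow (Term.var (Sum.inr 1)) k))

attribute [local instance] grpStructure

@[simp] theorem realize_mulCommFormula {G : Type*} [Group G] (v : α → G) :
    (mulCommFormula : grpLang.Formula α).Realize v ↔ ∀ x y : G, x * y = y * x := by
  simp [mulCommFormula, Formula.Realize, Fin.snoc]

variable {G : Type*} [CommGroup G] {n : ℕ} (v : Fin n → G)

@[simp] theorem realize_prodZPowEqOneFormula (m : Fin n → ℤ) :
    (prodZPowEqOneFormula m).Realize v ↔ ∏ i, v i ^ m i = 1 := by
  simp [prodZPowEqOneFormula, Formula.realize_equal]

@[simp] theorem realize_spanModPowFormula (k : ℕ) :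
    (spanModPowFormula k).Realize v ↔
      ∀ x : G, ∃ r : Fin n → Fin k, ∃ y : G, x = (∏ i, v i ^ (r i : ℤ)) * y ^ k := by
  simp [spanModPowFormula, Formula.Realize, BoundedFormula.realize_iSup, Fin.snoc]

end Formulas

end grpLang

section GroupType

variable {G H : Type*} [Group G] [Group H] {n : ℕ}

theorem realize_iff_of_groupTypeOfTuple_eq {a : Fin n → G} {b : Fin n → H}
    (hab : groupTypeOfTuple G a = groupTypeOfTuple H b) (φ : grpLang.Formula (Fin n)) :
    (letI := grpStructure G; φ.Realize a) ↔ (letI := grpStructure H; φ.Realize b) :=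
  Set.ext_iff.mp hab φ

theorem groupTypeOfTuple_comp_eq {m : ℕ} {a : Fin n → G} {b : Fin n → H}
    (hab : groupTypeOfTuple G a = groupTypeOfTuple H b) (g : Fin m → Fin n) :
    groupTypeOfTuple G (a ∘ g) = groupTypeOfTuple H (b ∘ g) := by
  ext φ
  simp only [groupTypeOfTuple, Set.mem_ofPred_eq]
  simpa only [Formula.realize_relabel] using realize_iff_of_groupTypeOfTuple_eq hab (φ.relabel g)

end GroupType

theorem mul_comm_of_groupTypeOfTuple_eq {G H : Type*} [CommGroup G] [Group H] {n : ℕ}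
    {a : Fin n → G} {b : Fin n → H} (hab : groupTypeOfTuple G a = groupTypeOfTuple H b)
    (x y : H) : x * y = y * x :=
  letI := grpStructure G
  letI := grpStructure H
  (grpLang.realize_mulCommFormula b).mp ((realize_iff_of_groupTypeOfTuple_eq hab _).mp <|
    (grpLang.realize_mulCommFormula a).mpr mul_comm) x y

theorem prod_zpow_snoc_eq_one_iff {G : Type*} [CommGroup G] {n : ℕ} (c : Fin (n + 1) → G)
    (m : Fin n → ℤ) :
    ∏ i, c i ^ (Fin.snoc (-m) 1 : Fin (n + 1) → ℤ) i = 1 ↔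
      c (Fin.last n) = ∏ i, c i.castSucc ^ m i := by
  rw [eq_comm (a := c _)]
  simp [Fin.prod_univ_castSucc, Finset.prod_inv_distrib, inv_mul_eq_one]

section CommGroupType

open grpLang

variable {G H : Type*} [CommGroup G] [CommGroup H] {n : ℕ} {a : Fin n → G} {b : Fin n → H}

attribute [local instance] grpStructure

theorem prod_zpow_eq_one_iff_of_groupTypeOfTuple_eq
    (hab : groupTypeOfTuple G a = groupTypeOfTuple H b) (m : Fin n → ℤ) :
    ∏ i, a i ^ m i = 1 ↔ ∏ i, b i ^ m i = 1 := by
  simpa using realize_iff_of_groupTypeOfTuple_eq hab (prodZPowEqOneFormula m)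

theorem spanModPow_iff_of_groupTypeOfTuple_eq
    (hab : groupTypeOfTuple G a = groupTypeOfTuple H b) (k : ℕ) :
    (∀ x : G, ∃ r : Fin n → Fin k, ∃ y : G, x = (∏ i, a i ^ (r i : ℤ)) * y ^ k) ↔
      ∀ x : H, ∃ r : Fin n → Fin k, ∃ y : H, x = (∏ i, b i ^ (r i : ℤ)) * y ^ k := by
  simpa using realize_iff_of_groupTypeOfTuple_eq hab (spanModPowFormula k)

theorem last_eq_prod_zpow_iff_of_groupTypeOfTuple_eq {a : Fin (n + 1) → G}
    {b : Fin (n + 1) → H} (hab : groupTypeOfTuple G a = groupTypeOfTuple H b) (m : Fin n → ℤ) :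
    a (Fin.last n) = ∏ i, a i.castSucc ^ m i ↔ b (Fin.last n) = ∏ i, b i.castSucc ^ m i := by
  rw [← prod_zpow_snoc_eq_one_iff, ← prod_zpow_snoc_eq_one_iff]
  exact prod_zpow_eq_one_iff_of_groupTypeOfTuple_eq hab _

end CommGroupType

open Matrix in
theorem Matrix.exists_vecMul_eq_natAbs_det_smul {ι : Type*} [Fintype ι] [DecidableEq ι]
    (M : Matrix ι ι ℤ) (y : ι → ℤ) : ∃ m : ι → ℤ, m ᵥ* M = (M.det.natAbs : ℤ) • y := by
  refine ⟨M.det.sign • (y ᵥ* M.adjugate), ?_⟩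
  rw [Matrix.smul_vecMul, Matrix.vecMul_vecMul, Matrix.adjugate_mul, Matrix.vecMul_smul,
    Matrix.vecMul_one, smul_smul, Int.sign_mul_self_eq_natAbs]

section FreeAbelian

open Matrix

variable {ι : Type*} [Fintype ι]

theorem toAdd_prod_zpow_apply (b : ι → ι → Multiplicative ℤ) (m : ι → ℤ) (j : ι) :
    ((∏ i, b i ^ m i) j).toAdd = (m ᵥ* Matrix.of fun i j => (b i j).toAdd) j := by
  simp [Finset.prod_apply, Matrix.vecMul, dotProduct]

theorem exists_pos_forall_pow_eq_prod_zpow [DecidableEq ι] {b : ι → ι → Multiplicative ℤ}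
    (hb : ∀ m : ι → ℤ, ∏ i, b i ^ m i = 1 → m = 0) :
    ∃ d > 0, ∀ y : ι → Multiplicative ℤ, ∃ m : ι → ℤ, y ^ d = ∏ i, b i ^ m i := by
  set M : Matrix ι ι ℤ := Matrix.of fun i j => (b i j).toAdd
  have hdet : M.det ≠ 0 := by
    intro h0
    obtain ⟨v, hv, hvM⟩ := Matrix.exists_vecMul_eq_zero_iff.mpr h0
    refine hv (hb v (funext fun j => Multiplicative.toAdd.injective ?_))
    rw [toAdd_prod_zpow_apply]
    exact congrFun hvM j
  refine ⟨M.det.natAbs, Int.natAbs_pos.mpr hdet, fun y => ?_⟩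
  obtain ⟨m, hm⟩ := M.exists_vecMul_eq_natAbs_det_smul fun j => (y j).toAdd
  refine ⟨m, funext fun j => Multiplicative.toAdd.injective ?_⟩
  rw [toAdd_prod_zpow_apply, hm]
  simp

end FreeAbelian

def stdBasis (n : ℕ) : Fin n → Fin n → Multiplicative ℤ :=
  fun i => Pi.mulSingle i (Multiplicative.ofAdd 1)

theorem prod_stdBasis_zpow {n : ℕ} (m : Fin n → ℤ) :
    ∏ i, stdBasis n i ^ m i = fun j => Multiplicative.ofAdd (m j) := by
  simp [stdBasis, ← Pi.mulSingle_zpow, Finset.univ_prod_mulSingle, ← ofAdd_zsmul]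

theorem stdBasis_spanModPow {n k : ℕ} (hk : 0 < k) (x : Fin n → Multiplicative ℤ) :
    ∃ r : Fin n → Fin k, ∃ y, x = (∏ i, stdBasis n i ^ (r i : ℤ)) * y ^ k := by
  have hk' : (0 : ℤ) < k := by exact_mod_cast hk
  have hr (j : Fin n) : 0 ≤ (x j).toAdd % k := Int.emod_nonneg _ hk'.ne'
  refine ⟨fun j => ⟨((x j).toAdd % k).toNat, (Int.toNat_lt' hk).2 (Int.emod_lt_of_pos _ hk')⟩,
    fun j => .ofAdd ((x j).toAdd / k), funext fun j => Multiplicative.toAdd.injective ?_⟩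
  simp [prod_stdBasis_zpow, max_eq_left (hr j), Int.emod_add_mul_ediv]

theorem eq_zero_of_prod_stdBasis_zpow_eq_one {n : ℕ} {m : Fin n → ℤ}
    (hm : ∏ i, stdBasis n i ^ m i = 1) : m = 0 := by
  rw [prod_stdBasis_zpow] at hm
  exact funext fun j => by simpa using congrFun hm j

theorem exists_eq_prod_zpow_of_groupTypeOfTuple_eq_stdBasis {n : ℕ}
    {b : Fin n → Fin n → Multiplicative ℤ}
    (hb : groupTypeOfTuple _ (stdBasis n) = groupTypeOfTuple _ b) (x : Fin n → Multiplicative ℤ) :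
    ∃ m : Fin n → ℤ, x = ∏ i, b i ^ m i := by
  have hind (m : Fin n → ℤ) (hm : ∏ i, b i ^ m i = 1) : m = 0 :=
    eq_zero_of_prod_stdBasis_zpow_eq_one ((prod_zpow_eq_one_iff_of_groupTypeOfTuple_eq hb m).2 hm)
  obtain ⟨d, hd, hpow⟩ := exists_pos_forall_pow_eq_prod_zpow hind
  obtain ⟨r, y, rfl⟩ :=
    (spanModPow_iff_of_groupTypeOfTuple_eq hb d).1 (stdBasis_spanModPow hd) x
  obtain ⟨m, hm⟩ := hpow y
  exact ⟨fun i => r i + m i, by simp [hm, zpow_add, Finset.prod_mul_distrib]⟩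

section Hom

variable {G : Type*} [CommGroup G] {ι : Type*} [Fintype ι]

def prodZPowHom (a : ι → G) : (ι → Multiplicative ℤ) →* G :=
  MonoidHom.mk' (fun x => ∏ i, a i ^ (x i).toAdd) fun x y => by
    simp [zpow_add, Finset.prod_mul_distrib]

theorem prodZPowHom_apply (a : ι → G) (x : ι → Multiplicative ℤ) :
    prodZPowHom a x = ∏ i, a i ^ (x i).toAdd := rfl

end Hom

theorem nonempty_mulEquiv_of_isotypic {H : Type*} [CommGroup H] {n : ℕ}
    (h : GroupIsotypic H (Fin n → Multiplicative ℤ)) :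
    Nonempty (H ≃* (Fin n → Multiplicative ℤ)) := by
  obtain ⟨a, ha⟩ := (h n).2 (stdBasis n)
  have hinj : Function.Injective (prodZPowHom a) := by
    refine (injective_iff_map_eq_one _).2 fun x hx => funext fun j => ?_
    have := eq_zero_of_prod_stdBasis_zpow_eq_one
      ((prod_zpow_eq_one_iff_of_groupTypeOfTuple_eq ha _).1 hx)
    exact congrFun this j
  have hsurj : Function.Surjective (prodZPowHom a) := by
    intro x
    obtain ⟨c, hc⟩ := (h (n + 1)).1 (Fin.snoc a x)
    have hb : groupTypeOfTuple _ (stdBasis n) = groupTypeOfTuple _ (c ∘ Fin.castSucc) := by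
      rw [← groupTypeOfTuple_comp_eq hc, Fin.snoc_comp_castSucc, ha]
    obtain ⟨m, hm⟩ := exists_eq_prod_zpow_of_groupTypeOfTuple_eq_stdBasis hb (c (Fin.last n))
    have hx := (last_eq_prod_zpow_iff_of_groupTypeOfTuple_eq hc m).2 hm
    simp only [Fin.snoc_last, Fin.snoc_castSucc] at hx
    exact ⟨fun i => .ofAdd (m i), by simp [prodZPowHom_apply, hx]⟩
  exact ⟨(MulEquiv.ofBijective _ ⟨hinj, hsurj⟩).symm⟩

/-- **Isotypic rigidity of finitely generated free abelian groups.**  Every group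
isotypic to `ℤ^n` (the direct product of `n` copies of the integers, written
multiplicatively) is isomorphic to `ℤ^n`. -/
theorem freeAbelian_isotypic_rigidity
    (n : ℕ) (H : Type*) [Group H]
    (h : GroupIsotypic H (Fin n → Multiplicative ℤ)) :
    Nonempty (H ≃* (Fin n → Multiplicative ℤ)) := by
  obtain ⟨a, ha⟩ := (h 0).2 ![]
  let _ : CommGroup H := { mul_comm := mul_comm_of_groupTypeOfTuple_eq ha.symm }
  exact nonempty_mulEquiv_of_isotypic h
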